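/- arXiv:1807.01959 — 2 statements merged into one kernel-verified Lean document; each statement's English description precedes it below -/
import Mathlib

section
/- Let v₁, v₂, v₃, v₄ be C^∞ vector fields on ℝ^N with [v₁,v₂] = [v₁,v₃] = [v₁,v₄] = 0, [v₂,v₃] = 0 and [v₃,v₄] = 0. Then the bivector field v₁,C ∧ v₂,V + v₃,C ∧ v₄,V on ℝ^N × ℝ^N is a Poisson tensor. -/
open scoped BigOperators

/-- Partial derivative of `f : ℝ^N → ℝ` in the `s`-th coordinate direction. -/
noncomputable def pd {N : ℕ} (f : (Fin N → ℝ) → ℝ) (s : Fin N) (x : Fin N → ℝ) : ℝ :=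
  fderiv ℝ f x (Pi.single s 1)

/-- Coordinate direction on `ℝ^N × ℝ^N` indexed by `Fin N ⊕ Fin N`. -/
noncomputable def dir (N : ℕ) (a : Fin N ⊕ Fin N) : (Fin N → ℝ) × (Fin N → ℝ) :=
  Sum.elim (fun i => (Pi.single i 1, 0)) (fun i => (0, Pi.single i 1)) a

/-- Partial derivative on `ℝ^N × ℝ^N` in the `a`-th coordinate direction. -/
noncomputable def pdT {N : ℕ} (F : (Fin N → ℝ) × (Fin N → ℝ) → ℝ)
    (a : Fin N ⊕ Fin N) (z : (Fin N → ℝ) × (Fin N → ℝ)) : ℝ :=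
  fderiv ℝ F z (dir N a)

/-- `π` is a Poisson tensor on `ℝ^N`: a smooth antisymmetric bivector field
satisfying the Jacobi identity. -/
def IsPoisson {N : ℕ} (π : (Fin N → ℝ) → Matrix (Fin N) (Fin N) ℝ) : Prop :=
  (∀ i j, ContDiff ℝ (⊤ : ℕ∞) fun x => π x i j) ∧
  (∀ x i j, π x j i = - π x i j) ∧
  (∀ x i j k, ∑ s, (π x i s * pd (fun x => π x j k) s x
      + π x j s * pd (fun x => π x k i) s x
      + π x k s * pd (fun x => π x i j) s x) = 0)

/-- `v` is a (smooth) Poisson vector field for `π` (i.e. `L_v π = 0`). -/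
def IsPoissonVF {N : ℕ} (π : (Fin N → ℝ) → Matrix (Fin N) (Fin N) ℝ)
    (v : (Fin N → ℝ) → Fin N → ℝ) : Prop :=
  (∀ i, ContDiff ℝ (⊤ : ℕ∞) fun x => v x i) ∧
  (∀ x i j, ∑ s, (pd (fun x => π x i j) s x * v x s
      - π x s j * pd (fun x => v x i) s x
      - π x i s * pd (fun x => v x j) s x) = 0)

/-- The tangent lift `π_TM` of `π` to `ℝ^N × ℝ^N`. -/
noncomputable def tlift {N : ℕ} (π : (Fin N → ℝ) → Matrix (Fin N) (Fin N) ℝ)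
    (z : (Fin N → ℝ) × (Fin N → ℝ)) : Matrix (Fin N ⊕ Fin N) (Fin N ⊕ Fin N) ℝ :=
  Matrix.of fun a b =>
    match a, b with
    | Sum.inl _, Sum.inl _ => 0
    | Sum.inl i, Sum.inr j => π z.1 i j
    | Sum.inr i, Sum.inl j => π z.1 i j
    | Sum.inr i, Sum.inr j => ∑ s, pd (fun x => π x i j) s z.1 * z.2 s

/-- The complete lift `v_C` of a vector field `v`. -/
noncomputable def liftC {N : ℕ} (v : (Fin N → ℝ) → Fin N → ℝ)
    (z : (Fin N → ℝ) × (Fin N → ℝ)) : Fin N ⊕ Fin N → ℝ :=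
  Sum.elim (fun i => v z.1 i) (fun i => ∑ s, pd (fun x => v x i) s z.1 * z.2 s)

/-- The vertical lift `v_V` of a vector field `v`. -/
def liftV {N : ℕ} (v : (Fin N → ℝ) → Fin N → ℝ)
    (z : (Fin N → ℝ) × (Fin N → ℝ)) : Fin N ⊕ Fin N → ℝ :=
  Sum.elim (fun _ => 0) (fun i => v z.1 i)

/-- The wedge `u ∧ w` of two vector fields, as a bivector field. -/
def wedge {Z ι : Type*} (u w : Z → ι → ℝ) (z : Z) : Matrix ι ι ℝ :=
  Matrix.of fun a b => u z a * w z b - u z b * w z a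

/-- A Poisson tensor on `ℝ^N × ℝ^N`: a smooth antisymmetric bivector field
satisfying the Jacobi identity. -/
def IsPoissonT {N : ℕ}
    (P : (Fin N → ℝ) × (Fin N → ℝ) → Matrix (Fin N ⊕ Fin N) (Fin N ⊕ Fin N) ℝ) : Prop :=
  (∀ a b, ContDiff ℝ (⊤ : ℕ∞) fun z => P z a b) ∧
  (∀ z a b, P z b a = - P z a b) ∧
  (∀ z a b c, ∑ s, (P z a s * pdT (fun z => P z b c) s z
      + P z b s * pdT (fun z => P z c a) s z
      + P z c s * pdT (fun z => P z a b) s z) = 0)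

/-- `c` is a Casimir function for `π` on `ℝ^N`. -/
def IsCasimir {N : ℕ} (π : (Fin N → ℝ) → Matrix (Fin N) (Fin N) ℝ)
    (c : (Fin N → ℝ) → ℝ) : Prop :=
  ContDiff ℝ (⊤ : ℕ∞) c ∧ ∀ x j, ∑ i, pd c i x * π x i j = 0

/-- `F` is a Casimir function for the bivector field `P` on `ℝ^N × ℝ^N`. -/
def IsCasimirT {N : ℕ}
    (P : (Fin N → ℝ) × (Fin N → ℝ) → Matrix (Fin N ⊕ Fin N) (Fin N ⊕ Fin N) ℝ)
    (F : (Fin N → ℝ) × (Fin N → ℝ) → ℝ) : Prop :=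
  ∀ z b, ∑ a, pdT F a z * P z a b = 0

/-- `f ∘ q : ℝ^N × ℝ^N → ℝ`. -/
def fq {N : ℕ} (f : (Fin N → ℝ) → ℝ) (z : (Fin N → ℝ) × (Fin N → ℝ)) : ℝ := f z.1

/-- The fiber-wise linear function `l_{df}` on `ℝ^N × ℝ^N`. -/
noncomputable def ldf {N : ℕ} (f : (Fin N → ℝ) → ℝ) (z : (Fin N → ℝ) × (Fin N → ℝ)) : ℝ :=
  ∑ s, pd f s z.1 * z.2 s

/-- The commutator `[v,w]` of two vector fields on `ℝ^N`. -/
noncomputable def vbr {N : ℕ} (v w : (Fin N → ℝ) → Fin N → ℝ)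
    (x : Fin N → ℝ) (i : Fin N) : ℝ :=
  ∑ s, (v x s * pd (fun x => w x i) s x - w x s * pd (fun x => v x i) s x)

section helpers
variable {N : ℕ} {F G : (Fin N → ℝ) × (Fin N → ℝ) → ℝ} {z : (Fin N → ℝ) × (Fin N → ℝ)}

lemma pd_smooth {f : (Fin N → ℝ) → ℝ} (hf : ContDiff ℝ (⊤ : ℕ∞) f) (s : Fin N) :
    ContDiff ℝ (⊤ : ℕ∞) (pd f s) :=
  (hf.fderiv_right (by simp)).clm_apply contDiff_const

lemma pdT_add (hF : DifferentiableAt ℝ F z) (hG : DifferentiableAt ℝ G z) (a : Fin N ⊕ Fin N) :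
    pdT (fun z => F z + G z) a z = pdT F a z + pdT G a z := by
  simp [pdT, fderiv_fun_add hF hG]

lemma pdT_sub (hF : DifferentiableAt ℝ F z) (hG : DifferentiableAt ℝ G z) (a : Fin N ⊕ Fin N) :
    pdT (fun z => F z - G z) a z = pdT F a z - pdT G a z := by
  simp [pdT, fderiv_fun_sub hF hG]

lemma pdT_mul (hF : DifferentiableAt ℝ F z) (hG : DifferentiableAt ℝ G z) (a : Fin N ⊕ Fin N) :
    pdT (fun z => F z * G z) a z = pdT F a z * G z + F z * pdT G a z := by
  simp [pdT, fderiv_fun_mul hF hG]; ring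

lemma pdT_sum {ι : Type*} [Fintype ι] {A : ι → ((Fin N → ℝ) × (Fin N → ℝ)) → ℝ}
    (h : ∀ i, DifferentiableAt ℝ (A i) z) (a : Fin N ⊕ Fin N) :
    pdT (fun z => ∑ i, A i z) a z = ∑ i, pdT (A i) a z := by
  simp [pdT, fderiv_fun_sum (fun i _ => h i)]

lemma pdT_fst_inl {f : (Fin N → ℝ) → ℝ} (hf : DifferentiableAt ℝ f z.1) (s : Fin N) :
    pdT (fun z => f z.1) (Sum.inl s) z = pd f s z.1 := by
  have h : fderiv ℝ (fun z : (Fin N → ℝ) × (Fin N → ℝ) => f z.1) z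
      = (fderiv ℝ f z.1).comp (ContinuousLinearMap.fst ℝ _ _) :=
    (hf.hasFDerivAt.comp z hasFDerivAt_fst).fderiv
  simp [pdT, h, dir, pd]

lemma pdT_fst_inr {f : (Fin N → ℝ) → ℝ} (hf : DifferentiableAt ℝ f z.1) (s : Fin N) :
    pdT (fun z => f z.1) (Sum.inr s) z = 0 := by
  have h : fderiv ℝ (fun z : (Fin N → ℝ) × (Fin N → ℝ) => f z.1) z
      = (fderiv ℝ f z.1).comp (ContinuousLinearMap.fst ℝ _ _) :=
    (hf.hasFDerivAt.comp z hasFDerivAt_fst).fderiv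
  simp [pdT, h, dir]

lemma pdT_snd (t : Fin N) (a : Fin N ⊕ Fin N) :
    pdT (fun z => z.2 t) a z = (dir N a).2 t := by
  have h : HasFDerivAt (fun z : (Fin N → ℝ) × (Fin N → ℝ) => z.2 t)
      ((ContinuousLinearMap.proj t).comp (ContinuousLinearMap.snd ℝ _ _)) z :=
    ContinuousLinearMap.hasFDerivAt ((ContinuousLinearMap.proj t).comp (ContinuousLinearMap.snd ℝ (Fin N → ℝ) (Fin N → ℝ)))
  simp [pdT, h.fderiv]

lemma pd_comm {f : (Fin N → ℝ) → ℝ} (hf : ContDiff ℝ (⊤ : ℕ∞) f) (s t : Fin N) (x : Fin N → ℝ) :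
    pd (fun x => pd f t x) s x = pd (fun x => pd f s x) t x := by
  have hd : ∀ y, HasFDerivAt f (fderiv ℝ f y) y :=
    fun y => (hf.differentiable (by simp : ((⊤ : ℕ∞) : WithTop ℕ∞) ≠ 0) y).hasFDerivAt
  have h2 : DifferentiableAt ℝ (fderiv ℝ f) x :=
    ((hf.fderiv_right (by simp)).differentiable (by simp : ((⊤ : ℕ∞) : WithTop ℕ∞) ≠ 0)) x
  have hsym := second_derivative_symmetric hd h2.hasFDerivAt (Pi.single t 1) (Pi.single s 1)
  simp only [pd]
  rw [fderiv_clm_apply h2 (differentiableAt_const (Pi.single t 1)),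
      fderiv_clm_apply h2 (differentiableAt_const (Pi.single s 1))]
  simp [hsym]

end helpers

section helpers2
variable {N : ℕ} {v w : (Fin N → ℝ) → Fin N → ℝ} {z : (Fin N → ℝ) × (Fin N → ℝ)}

lemma pdT_const (c : ℝ) (a : Fin N ⊕ Fin N) :
    pdT (fun _ => c) a z = 0 := by
  simp [pdT, fderiv_const]

lemma pd_mul {f g : (Fin N → ℝ) → ℝ} {x : Fin N → ℝ} (hf : DifferentiableAt ℝ f x)
    (hg : DifferentiableAt ℝ g x) (s : Fin N) :
    pd (fun x => f x * g x) s x = pd f s x * g x + f x * pd g s x := by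
  simp [pd, fderiv_fun_mul hf hg]; ring

lemma pd_sum {ι : Type*} [Fintype ι] {A : ι → (Fin N → ℝ) → ℝ} {x : Fin N → ℝ}
    (h : ∀ i, DifferentiableAt ℝ (A i) x) (s : Fin N) :
    pd (fun x => ∑ i, A i x) s x = ∑ i, pd (A i) s x := by
  simp [pd, fderiv_fun_sum (fun i _ => h i)]

lemma pdT_lin_inl {f : (Fin N → ℝ) → ℝ} (hf : ContDiff ℝ (⊤ : ℕ∞) f) (s : Fin N) :
    pdT (fun z => ∑ t, pd f t z.1 * z.2 t) (Sum.inl s) z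
      = ∑ t, pd (fun x => pd f t x) s z.1 * z.2 t := by
  have dPdf : ∀ t, DifferentiableAt ℝ (fun z : (Fin N → ℝ) × (Fin N → ℝ) => pd f t z.1) z :=
    fun t => (((pd_smooth hf t).comp contDiff_fst).differentiable (by simp : ((⊤ : ℕ∞) : WithTop ℕ∞) ≠ 0)) z
  have dY : ∀ t, DifferentiableAt ℝ (fun z : (Fin N → ℝ) × (Fin N → ℝ) => z.2 t) z :=
    fun t => ((((contDiff_pi.1 contDiff_id t)).comp contDiff_snd).differentiable (by simp : ((⊤ : ℕ∞) : WithTop ℕ∞) ≠ 0)) z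
  rw [pdT_sum (fun t => (dPdf t).fun_mul (dY t))]
  refine Finset.sum_congr rfl fun t _ => ?_
  rw [pdT_mul (dPdf t) (dY t), pdT_fst_inl ((pd_smooth hf t).differentiable (by simp : ((⊤ : ℕ∞) : WithTop ℕ∞) ≠ 0) z.1) s,
    pdT_snd]
  simp [dir]

lemma pdT_lin_inr {f : (Fin N → ℝ) → ℝ} (hf : ContDiff ℝ (⊤ : ℕ∞) f) (s : Fin N) :
    pdT (fun z => ∑ t, pd f t z.1 * z.2 t) (Sum.inr s) z = pd f s z.1 := by
  have dPdf : ∀ t, DifferentiableAt ℝ (fun z : (Fin N → ℝ) × (Fin N → ℝ) => pd f t z.1) z :=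
    fun t => (((pd_smooth hf t).comp contDiff_fst).differentiable (by simp : ((⊤ : ℕ∞) : WithTop ℕ∞) ≠ 0)) z
  have dY : ∀ t, DifferentiableAt ℝ (fun z : (Fin N → ℝ) × (Fin N → ℝ) => z.2 t) z :=
    fun t => ((((contDiff_pi.1 contDiff_id t)).comp contDiff_snd).differentiable (by simp : ((⊤ : ℕ∞) : WithTop ℕ∞) ≠ 0)) z
  rw [pdT_sum (fun t => (dPdf t).fun_mul (dY t))]
  have : ∀ t, pdT (fun z : (Fin N → ℝ) × (Fin N → ℝ) => pd f t z.1 * z.2 t) (Sum.inr s) z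
      = pd f t z.1 * (Pi.single s (1:ℝ) : Fin N → ℝ) t := by
    intro t
    rw [pdT_mul (dPdf t) (dY t), pdT_fst_inr ((pd_smooth hf t).differentiable (by simp : ((⊤ : ℕ∞) : WithTop ℕ∞) ≠ 0) z.1) s,
      pdT_snd]
    simp [dir]
  rw [Finset.sum_congr rfl fun t _ => this t]
  simp [Pi.single_apply]

lemma liftC_smooth (hv : ∀ i, ContDiff ℝ (⊤ : ℕ∞) fun x => v x i) (a : Fin N ⊕ Fin N) :
    ContDiff ℝ (⊤ : ℕ∞) (fun z => liftC v z a) := by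
  cases a with
  | inl i => simpa [liftC, Function.comp_def] using (hv i).comp contDiff_fst
  | inr i =>
    simp only [liftC, Sum.elim_inr]
    exact ContDiff.sum fun t _ =>
      ((pd_smooth (hv i) t).comp contDiff_fst).mul ((contDiff_pi.1 contDiff_id t).comp contDiff_snd)

lemma liftV_smooth (hv : ∀ i, ContDiff ℝ (⊤ : ℕ∞) fun x => v x i) (a : Fin N ⊕ Fin N) :
    ContDiff ℝ (⊤ : ℕ∞) (fun z => liftV v z a) := by
  cases a with
  | inl i => simpa [liftV] using contDiff_const
  | inr i => simpa [liftV, Function.comp_def] using (hv i).comp contDiff_fst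

end helpers2

section Esums
variable {N : ℕ} {v w : (Fin N → ℝ) → Fin N → ℝ} {z : (Fin N → ℝ) × (Fin N → ℝ)}

/-- L1 -/
lemma E_C_V_inl (i : Fin N) :
    ∑ s, liftC v z s * pdT (fun z => liftV w z (Sum.inl i)) s z = 0 := by
  simp only [liftV, Sum.elim_inl, pdT_const, mul_zero, Finset.sum_const_zero]

/-- L2 -/
lemma E_V_C_inl (hv : ∀ i, ContDiff ℝ (⊤ : ℕ∞) fun x => v x i) (i : Fin N) :
    ∑ s, liftV w z s * pdT (fun z => liftC v z (Sum.inl i)) s z = 0 := by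
  simp only [liftC, liftV, Sum.elim_inl]
  rw [Fintype.sum_sum_type]
  simp only [Sum.elim_inl, Sum.elim_inr, zero_mul, Finset.sum_const_zero, zero_add,
    pdT_fst_inr (((hv i).differentiable (by simp : ((⊤ : ℕ∞) : WithTop ℕ∞) ≠ 0)) z.1), mul_zero]

/-- L3 -/
lemma E_C_V_inr (hw : ∀ i, ContDiff ℝ (⊤ : ℕ∞) fun x => w x i) (i : Fin N) :
    ∑ s, liftC v z s * pdT (fun z => liftV w z (Sum.inr i)) s z
      = ∑ s, v z.1 s * pd (fun x => w x i) s z.1 := by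
  simp only [liftC, liftV, Sum.elim_inr]
  rw [Fintype.sum_sum_type]
  simp only [Sum.elim_inl, Sum.elim_inr,
    pdT_fst_inl (((hw i).differentiable (by simp : ((⊤ : ℕ∞) : WithTop ℕ∞) ≠ 0)) z.1),
    pdT_fst_inr (((hw i).differentiable (by simp : ((⊤ : ℕ∞) : WithTop ℕ∞) ≠ 0)) z.1), mul_zero,
    Finset.sum_const_zero, add_zero]

/-- L4 -/
lemma E_V_C_inr (hv : ∀ i, ContDiff ℝ (⊤ : ℕ∞) fun x => v x i) (i : Fin N) :
    ∑ s, liftV w z s * pdT (fun z => liftC v z (Sum.inr i)) s z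
      = ∑ s, w z.1 s * pd (fun x => v x i) s z.1 := by
  simp only [liftC, liftV, Sum.elim_inr]
  rw [Fintype.sum_sum_type]
  simp only [Sum.elim_inl, Sum.elim_inr, zero_mul, Finset.sum_const_zero, zero_add,
    pdT_lin_inr (hv i)]

/-- L5 -/
lemma E_V_V (hw : ∀ i, ContDiff ℝ (⊤ : ℕ∞) fun x => w x i) (a : Fin N ⊕ Fin N) :
    ∑ s, liftV v z s * pdT (fun z => liftV w z a) s z = 0 := by
  cases a with
  | inl i =>
    simp only [liftV, Sum.elim_inl, pdT_const, mul_zero, Finset.sum_const_zero]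
  | inr i =>
    simp only [liftV, Sum.elim_inr]
    rw [Fintype.sum_sum_type]
    simp only [Sum.elim_inl, Sum.elim_inr, zero_mul, Finset.sum_const_zero, zero_add,
      pdT_fst_inr (((hw i).differentiable (by simp : ((⊤ : ℕ∞) : WithTop ℕ∞) ≠ 0)) z.1), mul_zero]

/-- L6 -/
lemma E_C_C_inl (hw : ∀ i, ContDiff ℝ (⊤ : ℕ∞) fun x => w x i) (i : Fin N) :
    ∑ s, liftC v z s * pdT (fun z => liftC w z (Sum.inl i)) s z
      = ∑ s, v z.1 s * pd (fun x => w x i) s z.1 := by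
  simp only [liftC, Sum.elim_inl, Sum.elim_inr]
  rw [Fintype.sum_sum_type]
  simp only [Sum.elim_inl, Sum.elim_inr,
    pdT_fst_inl (((hw i).differentiable (by simp : ((⊤ : ℕ∞) : WithTop ℕ∞) ≠ 0)) z.1),
    pdT_fst_inr (((hw i).differentiable (by simp : ((⊤ : ℕ∞) : WithTop ℕ∞) ≠ 0)) z.1), mul_zero,
    Finset.sum_const_zero, add_zero]

/-- L7 -/
lemma E_C_C_inr (hv : ∀ i, ContDiff ℝ (⊤ : ℕ∞) fun x => v x i)
    (hw : ∀ i, ContDiff ℝ (⊤ : ℕ∞) fun x => w x i) (i : Fin N) :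
    ∑ s, liftC v z s * pdT (fun z => liftC w z (Sum.inr i)) s z
      = ∑ t, pd (fun x => ∑ s, v x s * pd (fun x => w x i) s x) t z.1 * z.2 t := by
  simp only [liftC, Sum.elim_inl, Sum.elim_inr]
  rw [Fintype.sum_sum_type]
  simp only [Sum.elim_inl, Sum.elim_inr, pdT_lin_inl (hw i), pdT_lin_inr (hw i)]
  have hK : ∀ t, pd (fun x => ∑ s, v x s * pd (fun x => w x i) s x) t z.1
      = ∑ s, (pd (fun x => v x s) t z.1 * pd (fun x => w x i) s z.1
          + v z.1 s * pd (fun x => pd (fun x => w x i) s x) t z.1) := by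
    intro t
    rw [pd_sum (fun s => (((hv s).differentiable (by simp : ((⊤ : ℕ∞) : WithTop ℕ∞) ≠ 0)) z.1).fun_mul
      (((pd_smooth (hw i) s).differentiable (by simp : ((⊤ : ℕ∞) : WithTop ℕ∞) ≠ 0)) z.1)) t]
    exact Finset.sum_congr rfl fun s _ => pd_mul (((hv s).differentiable (by simp : ((⊤ : ℕ∞) : WithTop ℕ∞) ≠ 0)) z.1)
      (((pd_smooth (hw i) s).differentiable (by simp : ((⊤ : ℕ∞) : WithTop ℕ∞) ≠ 0)) z.1) t
  simp only [hK]
  calc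
    (∑ s, v z.1 s * ∑ t, pd (fun x => pd (fun x => w x i) t x) s z.1 * z.2 t)
        + ∑ s, (∑ t, pd (fun x => v x s) t z.1 * z.2 t) * pd (fun x => w x i) s z.1
      = (∑ s, ∑ t, v z.1 s * (pd (fun x => pd (fun x => w x i) s x) t z.1 * z.2 t))
        + ∑ s, ∑ t, pd (fun x => v x s) t z.1 * z.2 t * pd (fun x => w x i) s z.1 := by
        congr 1
        · refine Finset.sum_congr rfl fun s _ => ?_
          rw [Finset.mul_sum]
          refine Finset.sum_congr rfl fun t _ => ?_
          rw [pd_comm (hw i) t s z.1]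
        · exact Finset.sum_congr rfl fun s _ => Finset.sum_mul _ _ _
    _ = (∑ t, ∑ s, v z.1 s * (pd (fun x => pd (fun x => w x i) s x) t z.1 * z.2 t))
        + ∑ t, ∑ s, pd (fun x => v x s) t z.1 * z.2 t * pd (fun x => w x i) s z.1 := by
        rw [Finset.sum_comm (f := fun s t => v z.1 s * (pd (fun x => pd (fun x => w x i) s x) t z.1 * z.2 t)),
          Finset.sum_comm (f := fun s t => pd (fun x => v x s) t z.1 * z.2 t * pd (fun x => w x i) s z.1)]
    _ = ∑ t, (∑ s, (pd (fun x => v x s) t z.1 * pd (fun x => w x i) s z.1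
          + v z.1 s * pd (fun x => pd (fun x => w x i) s x) t z.1)) * z.2 t := by
        rw [← Finset.sum_add_distrib]
        refine Finset.sum_congr rfl fun t _ => ?_
        rw [Finset.sum_mul, ← Finset.sum_add_distrib]
        exact Finset.sum_congr rfl fun s _ => by ring

end Esums

lemma wedge_sum_isPoissonT {N : ℕ}
    (U₁ U₂ U₃ U₄ : ((Fin N → ℝ) × (Fin N → ℝ)) → (Fin N ⊕ Fin N) → ℝ)
    (h₁ : ∀ a, ContDiff ℝ (⊤ : ℕ∞) fun z => U₁ z a) (h₂ : ∀ a, ContDiff ℝ (⊤ : ℕ∞) fun z => U₂ z a)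
    (h₃ : ∀ a, ContDiff ℝ (⊤ : ℕ∞) fun z => U₃ z a) (h₄ : ∀ a, ContDiff ℝ (⊤ : ℕ∞) fun z => U₄ z a)
    (hc₁₂ : ∀ z a, ∑ s, U₂ z s * pdT (fun z => U₁ z a) s z
      = ∑ s, U₁ z s * pdT (fun z => U₂ z a) s z)
    (hc₁₃ : ∀ z a, ∑ s, U₃ z s * pdT (fun z => U₁ z a) s z
      = ∑ s, U₁ z s * pdT (fun z => U₃ z a) s z)
    (hc₁₄ : ∀ z a, ∑ s, U₄ z s * pdT (fun z => U₁ z a) s z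
      = ∑ s, U₁ z s * pdT (fun z => U₄ z a) s z)
    (hc₂₃ : ∀ z a, ∑ s, U₃ z s * pdT (fun z => U₂ z a) s z
      = ∑ s, U₂ z s * pdT (fun z => U₃ z a) s z)
    (hc₂₄ : ∀ z a, ∑ s, U₄ z s * pdT (fun z => U₂ z a) s z
      = ∑ s, U₂ z s * pdT (fun z => U₄ z a) s z)
    (hc₃₄ : ∀ z a, ∑ s, U₄ z s * pdT (fun z => U₃ z a) s z
      = ∑ s, U₃ z s * pdT (fun z => U₄ z a) s z) :
    IsPoissonT (fun z => wedge U₁ U₂ z + wedge U₃ U₄ z) := by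
  refine ⟨?_, ?_, ?_⟩
  · intro a b
    simp only [Matrix.add_apply, wedge, Matrix.of_apply]
    exact (((h₁ a).mul (h₂ b)).sub ((h₁ b).mul (h₂ a))).add
      (((h₃ a).mul (h₄ b)).sub ((h₃ b).mul (h₄ a)))
  · intro z a b
    simp only [Matrix.add_apply, wedge, Matrix.of_apply]
    ring
  · intro z a b c
    have dU₁ : ∀ a, DifferentiableAt ℝ (fun z => U₁ z a) z := fun a => ((h₁ a).differentiable (by simp : ((⊤ : ℕ∞) : WithTop ℕ∞) ≠ 0)) z
    have dU₂ : ∀ a, DifferentiableAt ℝ (fun z => U₂ z a) z := fun a => ((h₂ a).differentiable (by simp : ((⊤ : ℕ∞) : WithTop ℕ∞) ≠ 0)) z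
    have dU₃ : ∀ a, DifferentiableAt ℝ (fun z => U₃ z a) z := fun a => ((h₃ a).differentiable (by simp : ((⊤ : ℕ∞) : WithTop ℕ∞) ≠ 0)) z
    have dU₄ : ∀ a, DifferentiableAt ℝ (fun z => U₄ z a) z := fun a => ((h₄ a).differentiable (by simp : ((⊤ : ℕ∞) : WithTop ℕ∞) ≠ 0)) z
    have hder : ∀ (b c : Fin N ⊕ Fin N) (s : Fin N ⊕ Fin N),
        pdT (fun z => U₁ z b * U₂ z c - U₁ z c * U₂ z b
          + (U₃ z b * U₄ z c - U₃ z c * U₄ z b)) s z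
        = (pdT (fun z => U₁ z b) s z * U₂ z c + U₁ z b * pdT (fun z => U₂ z c) s z)
          - (pdT (fun z => U₁ z c) s z * U₂ z b + U₁ z c * pdT (fun z => U₂ z b) s z)
          + ((pdT (fun z => U₃ z b) s z * U₄ z c + U₃ z b * pdT (fun z => U₄ z c) s z)
          - (pdT (fun z => U₃ z c) s z * U₄ z b + U₃ z c * pdT (fun z => U₄ z b) s z)) := by
      intro b c s
      rw [pdT_add (((dU₁ b).fun_mul (dU₂ c)).fun_sub ((dU₁ c).fun_mul (dU₂ b)))
          (((dU₃ b).fun_mul (dU₄ c)).fun_sub ((dU₃ c).fun_mul (dU₄ b))),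
        pdT_sub ((dU₁ b).fun_mul (dU₂ c)) ((dU₁ c).fun_mul (dU₂ b)),
        pdT_sub ((dU₃ b).fun_mul (dU₄ c)) ((dU₃ c).fun_mul (dU₄ b)),
        pdT_mul (dU₁ b) (dU₂ c), pdT_mul (dU₁ c) (dU₂ b),
        pdT_mul (dU₃ b) (dU₄ c), pdT_mul (dU₃ c) (dU₄ b)]
    simp only [Matrix.add_apply, wedge, Matrix.of_apply]
    simp only [hder]
    trans (∑ s : Fin N ⊕ Fin N,
      ((U₁ z a * U₂ z c) * (U₂ z s * pdT (fun z => U₁ z b) s z)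
      + (U₁ z a * U₁ z b) * (U₂ z s * pdT (fun z => U₂ z c) s z)
      + -(U₁ z a * U₂ z b) * (U₂ z s * pdT (fun z => U₁ z c) s z)
      + -(U₁ z a * U₁ z c) * (U₂ z s * pdT (fun z => U₂ z b) s z)
      + (U₁ z a * U₄ z c) * (U₂ z s * pdT (fun z => U₃ z b) s z)
      + (U₁ z a * U₃ z b) * (U₂ z s * pdT (fun z => U₄ z c) s z)
      + -(U₁ z a * U₄ z b) * (U₂ z s * pdT (fun z => U₃ z c) s z)
      + -(U₁ z a * U₃ z c) * (U₂ z s * pdT (fun z => U₄ z b) s z)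
      + -(U₂ z a * U₂ z c) * (U₁ z s * pdT (fun z => U₁ z b) s z)
      + -(U₂ z a * U₁ z b) * (U₁ z s * pdT (fun z => U₂ z c) s z)
      + (U₂ z a * U₂ z b) * (U₁ z s * pdT (fun z => U₁ z c) s z)
      + (U₂ z a * U₁ z c) * (U₁ z s * pdT (fun z => U₂ z b) s z)
      + -(U₂ z a * U₄ z c) * (U₁ z s * pdT (fun z => U₃ z b) s z)
      + -(U₂ z a * U₃ z b) * (U₁ z s * pdT (fun z => U₄ z c) s z)
      + (U₂ z a * U₄ z b) * (U₁ z s * pdT (fun z => U₃ z c) s z)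
      + (U₂ z a * U₃ z c) * (U₁ z s * pdT (fun z => U₄ z b) s z)
      + (U₃ z a * U₂ z c) * (U₄ z s * pdT (fun z => U₁ z b) s z)
      + (U₃ z a * U₁ z b) * (U₄ z s * pdT (fun z => U₂ z c) s z)
      + -(U₃ z a * U₂ z b) * (U₄ z s * pdT (fun z => U₁ z c) s z)
      + -(U₃ z a * U₁ z c) * (U₄ z s * pdT (fun z => U₂ z b) s z)
      + (U₃ z a * U₄ z c) * (U₄ z s * pdT (fun z => U₃ z b) s z)
      + (U₃ z a * U₃ z b) * (U₄ z s * pdT (fun z => U₄ z c) s z)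
      + -(U₃ z a * U₄ z b) * (U₄ z s * pdT (fun z => U₃ z c) s z)
      + -(U₃ z a * U₃ z c) * (U₄ z s * pdT (fun z => U₄ z b) s z)
      + -(U₄ z a * U₂ z c) * (U₃ z s * pdT (fun z => U₁ z b) s z)
      + -(U₄ z a * U₁ z b) * (U₃ z s * pdT (fun z => U₂ z c) s z)
      + (U₄ z a * U₂ z b) * (U₃ z s * pdT (fun z => U₁ z c) s z)
      + (U₄ z a * U₁ z c) * (U₃ z s * pdT (fun z => U₂ z b) s z)
      + -(U₄ z a * U₄ z c) * (U₃ z s * pdT (fun z => U₃ z b) s z)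
      + -(U₄ z a * U₃ z b) * (U₃ z s * pdT (fun z => U₄ z c) s z)
      + (U₄ z a * U₄ z b) * (U₃ z s * pdT (fun z => U₃ z c) s z)
      + (U₄ z a * U₃ z c) * (U₃ z s * pdT (fun z => U₄ z b) s z)
      + (U₁ z b * U₂ z a) * (U₂ z s * pdT (fun z => U₁ z c) s z)
      + (U₁ z b * U₁ z c) * (U₂ z s * pdT (fun z => U₂ z a) s z)
      + -(U₁ z b * U₂ z c) * (U₂ z s * pdT (fun z => U₁ z a) s z)
      + -(U₁ z b * U₁ z a) * (U₂ z s * pdT (fun z => U₂ z c) s z)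
      + (U₁ z b * U₄ z a) * (U₂ z s * pdT (fun z => U₃ z c) s z)
      + (U₁ z b * U₃ z c) * (U₂ z s * pdT (fun z => U₄ z a) s z)
      + -(U₁ z b * U₄ z c) * (U₂ z s * pdT (fun z => U₃ z a) s z)
      + -(U₁ z b * U₃ z a) * (U₂ z s * pdT (fun z => U₄ z c) s z)
      + -(U₂ z b * U₂ z a) * (U₁ z s * pdT (fun z => U₁ z c) s z)
      + -(U₂ z b * U₁ z c) * (U₁ z s * pdT (fun z => U₂ z a) s z)
      + (U₂ z b * U₂ z c) * (U₁ z s * pdT (fun z => U₁ z a) s z)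
      + (U₂ z b * U₁ z a) * (U₁ z s * pdT (fun z => U₂ z c) s z)
      + -(U₂ z b * U₄ z a) * (U₁ z s * pdT (fun z => U₃ z c) s z)
      + -(U₂ z b * U₃ z c) * (U₁ z s * pdT (fun z => U₄ z a) s z)
      + (U₂ z b * U₄ z c) * (U₁ z s * pdT (fun z => U₃ z a) s z)
      + (U₂ z b * U₃ z a) * (U₁ z s * pdT (fun z => U₄ z c) s z)
      + (U₃ z b * U₂ z a) * (U₄ z s * pdT (fun z => U₁ z c) s z)
      + (U₃ z b * U₁ z c) * (U₄ z s * pdT (fun z => U₂ z a) s z)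
      + -(U₃ z b * U₂ z c) * (U₄ z s * pdT (fun z => U₁ z a) s z)
      + -(U₃ z b * U₁ z a) * (U₄ z s * pdT (fun z => U₂ z c) s z)
      + (U₃ z b * U₄ z a) * (U₄ z s * pdT (fun z => U₃ z c) s z)
      + (U₃ z b * U₃ z c) * (U₄ z s * pdT (fun z => U₄ z a) s z)
      + -(U₃ z b * U₄ z c) * (U₄ z s * pdT (fun z => U₃ z a) s z)
      + -(U₃ z b * U₃ z a) * (U₄ z s * pdT (fun z => U₄ z c) s z)
      + -(U₄ z b * U₂ z a) * (U₃ z s * pdT (fun z => U₁ z c) s z)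
      + -(U₄ z b * U₁ z c) * (U₃ z s * pdT (fun z => U₂ z a) s z)
      + (U₄ z b * U₂ z c) * (U₃ z s * pdT (fun z => U₁ z a) s z)
      + (U₄ z b * U₁ z a) * (U₃ z s * pdT (fun z => U₂ z c) s z)
      + -(U₄ z b * U₄ z a) * (U₃ z s * pdT (fun z => U₃ z c) s z)
      + -(U₄ z b * U₃ z c) * (U₃ z s * pdT (fun z => U₄ z a) s z)
      + (U₄ z b * U₄ z c) * (U₃ z s * pdT (fun z => U₃ z a) s z)
      + (U₄ z b * U₃ z a) * (U₃ z s * pdT (fun z => U₄ z c) s z)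
      + (U₁ z c * U₂ z b) * (U₂ z s * pdT (fun z => U₁ z a) s z)
      + (U₁ z c * U₁ z a) * (U₂ z s * pdT (fun z => U₂ z b) s z)
      + -(U₁ z c * U₂ z a) * (U₂ z s * pdT (fun z => U₁ z b) s z)
      + -(U₁ z c * U₁ z b) * (U₂ z s * pdT (fun z => U₂ z a) s z)
      + (U₁ z c * U₄ z b) * (U₂ z s * pdT (fun z => U₃ z a) s z)
      + (U₁ z c * U₃ z a) * (U₂ z s * pdT (fun z => U₄ z b) s z)
      + -(U₁ z c * U₄ z a) * (U₂ z s * pdT (fun z => U₃ z b) s z)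
      + -(U₁ z c * U₃ z b) * (U₂ z s * pdT (fun z => U₄ z a) s z)
      + -(U₂ z c * U₂ z b) * (U₁ z s * pdT (fun z => U₁ z a) s z)
      + -(U₂ z c * U₁ z a) * (U₁ z s * pdT (fun z => U₂ z b) s z)
      + (U₂ z c * U₂ z a) * (U₁ z s * pdT (fun z => U₁ z b) s z)
      + (U₂ z c * U₁ z b) * (U₁ z s * pdT (fun z => U₂ z a) s z)
      + -(U₂ z c * U₄ z b) * (U₁ z s * pdT (fun z => U₃ z a) s z)
      + -(U₂ z c * U₃ z a) * (U₁ z s * pdT (fun z => U₄ z b) s z)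
      + (U₂ z c * U₄ z a) * (U₁ z s * pdT (fun z => U₃ z b) s z)
      + (U₂ z c * U₃ z b) * (U₁ z s * pdT (fun z => U₄ z a) s z)
      + (U₃ z c * U₂ z b) * (U₄ z s * pdT (fun z => U₁ z a) s z)
      + (U₃ z c * U₁ z a) * (U₄ z s * pdT (fun z => U₂ z b) s z)
      + -(U₃ z c * U₂ z a) * (U₄ z s * pdT (fun z => U₁ z b) s z)
      + -(U₃ z c * U₁ z b) * (U₄ z s * pdT (fun z => U₂ z a) s z)
      + (U₃ z c * U₄ z b) * (U₄ z s * pdT (fun z => U₃ z a) s z)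
      + (U₃ z c * U₃ z a) * (U₄ z s * pdT (fun z => U₄ z b) s z)
      + -(U₃ z c * U₄ z a) * (U₄ z s * pdT (fun z => U₃ z b) s z)
      + -(U₃ z c * U₃ z b) * (U₄ z s * pdT (fun z => U₄ z a) s z)
      + -(U₄ z c * U₂ z b) * (U₃ z s * pdT (fun z => U₁ z a) s z)
      + -(U₄ z c * U₁ z a) * (U₃ z s * pdT (fun z => U₂ z b) s z)
      + (U₄ z c * U₂ z a) * (U₃ z s * pdT (fun z => U₁ z b) s z)
      + (U₄ z c * U₁ z b) * (U₃ z s * pdT (fun z => U₂ z a) s z)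
      + -(U₄ z c * U₄ z b) * (U₃ z s * pdT (fun z => U₃ z a) s z)
      + -(U₄ z c * U₃ z a) * (U₃ z s * pdT (fun z => U₄ z b) s z)
      + (U₄ z c * U₄ z a) * (U₃ z s * pdT (fun z => U₃ z b) s z)
      + (U₄ z c * U₃ z b) * (U₃ z s * pdT (fun z => U₄ z a) s z)))
    · exact Finset.sum_congr rfl fun s _ => by ring
    · simp only [Finset.sum_add_distrib, ← Finset.mul_sum]
      simp only [hc₁₂ z, hc₁₃ z, hc₁₄ z, hc₂₃ z, hc₂₄ z, hc₃₄ z]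
      ring

/-- `v₁_C ∧ v₂_V + v₃_C ∧ v₄_V` is a Poisson tensor under the
stated commutation assumptions. -/
theorem sum_wedge_CV_CV_is_poisson {N : ℕ}
    (v₁ v₂ v₃ v₄ : (Fin N → ℝ) → Fin N → ℝ)
    (h₁ : ∀ i, ContDiff ℝ (⊤ : ℕ∞) fun x => v₁ x i) (h₂ : ∀ i, ContDiff ℝ (⊤ : ℕ∞) fun x => v₂ x i)
    (h₃ : ∀ i, ContDiff ℝ (⊤ : ℕ∞) fun x => v₃ x i) (h₄ : ∀ i, ContDiff ℝ (⊤ : ℕ∞) fun x => v₄ x i)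
    (h₁₂ : ∀ x i, vbr v₁ v₂ x i = 0) (h₁₃ : ∀ x i, vbr v₁ v₃ x i = 0)
    (h₁₄ : ∀ x i, vbr v₁ v₄ x i = 0) (h₂₃ : ∀ x i, vbr v₂ v₃ x i = 0)
    (h₃₄ : ∀ x i, vbr v₃ v₄ x i = 0) :
    IsPoissonT (fun z => wedge (liftC v₁) (liftV v₂) z + wedge (liftC v₃) (liftV v₄) z) := by
  have key : ∀ (v w : (Fin N → ℝ) → Fin N → ℝ), (∀ x i, vbr v w x i = 0) →
      ∀ (x : Fin N → ℝ) (i : Fin N),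
      ∑ s, v x s * pd (fun x => w x i) s x = ∑ s, w x s * pd (fun x => v x i) s x := by
    intro v w h x i
    have hh := h x i
    unfold vbr at hh
    rw [Finset.sum_sub_distrib] at hh
    linarith
  refine wedge_sum_isPoissonT (liftC v₁) (liftV v₂) (liftC v₃) (liftV v₄)
    (liftC_smooth h₁) (liftV_smooth h₂) (liftC_smooth h₃) (liftV_smooth h₄)
    ?_ ?_ ?_ ?_ ?_ ?_
  · -- hc₁₂ : V₂ vs C₁
    intro z a
    cases a with
    | inl i => rw [E_V_C_inl h₁ i, E_C_V_inl i]
    | inr i => rw [E_V_C_inr h₁ i, E_C_V_inr h₂ i]; exact (key v₁ v₂ h₁₂ z.1 i).symm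
  · -- hc₁₃ : C₃ vs C₁
    intro z a
    cases a with
    | inl i =>
      rw [E_C_C_inl h₁ i, E_C_C_inl h₃ i]
      exact (key v₁ v₃ h₁₃ z.1 i).symm
    | inr i =>
      rw [E_C_C_inr h₃ h₁ i, E_C_C_inr h₁ h₃ i]
      have : (fun x => ∑ s, v₃ x s * pd (fun x => v₁ x i) s x)
          = (fun x => ∑ s, v₁ x s * pd (fun x => v₃ x i) s x) :=
        funext fun x => (key v₁ v₃ h₁₃ x i).symm
      rw [this]
  · -- hc₁₄ : V₄ vs C₁
    intro z a
    cases a with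
    | inl i => rw [E_V_C_inl h₁ i, E_C_V_inl i]
    | inr i => rw [E_V_C_inr h₁ i, E_C_V_inr h₄ i]; exact (key v₁ v₄ h₁₄ z.1 i).symm
  · -- hc₂₃ : C₃ vs V₂
    intro z a
    cases a with
    | inl i => rw [E_C_V_inl i, E_V_C_inl h₃ i]
    | inr i => rw [E_C_V_inr h₂ i, E_V_C_inr h₃ i]; exact (key v₂ v₃ h₂₃ z.1 i).symm
  · -- hc₂₄ : V₄ vs V₂
    intro z a
    rw [E_V_V h₂ a, E_V_V h₄ a]
  · -- hc₃₄ : V₄ vs C₃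
    intro z a
    cases a with
    | inl i => rw [E_V_C_inl h₃ i, E_C_V_inl i]
    | inr i => rw [E_V_C_inr h₃ i, E_C_V_inr h₄ i]; exact (key v₃ v₄ h₃₄ z.1 i).symm
end

section
/- Let v₁, v₂, v₃, v₄ be C^∞ vector fields on ℝ^N with [v₁,v₂] = [v₁,v₃] = [v₁,v₄] = 0. Then the bivector field v₁,C ∧ v₂,V + v₃,V ∧ v₄,V on ℝ^N × ℝ^N is a Poisson tensor. -/
open scoped BigOperators

section Aux

set_option maxHeartbeats 1000000 in
lemma jacobi_wedge_sum {E : Type*} [NormedAddCommGroup E] [NormedSpace ℝ E]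
    {ι : Type*} [Fintype ι] (e : ι → E) (u w p q : E → ι → ℝ)
    (hu : ∀ m, Differentiable ℝ (fun z => u z m)) (hw : ∀ m, Differentiable ℝ (fun z => w z m))
    (hp : ∀ m, Differentiable ℝ (fun z => p z m)) (hq : ∀ m, Differentiable ℝ (fun z => q z m))
    (z : E)
    (huw : ∀ m, ∑ s, w z s * fderiv ℝ (fun z => u z m) z (e s)
        = ∑ s, u z s * fderiv ℝ (fun z => w z m) z (e s))
    (hup : ∀ m, ∑ s, p z s * fderiv ℝ (fun z => u z m) z (e s)
        = ∑ s, u z s * fderiv ℝ (fun z => p z m) z (e s))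
    (huq : ∀ m, ∑ s, q z s * fderiv ℝ (fun z => u z m) z (e s)
        = ∑ s, u z s * fderiv ℝ (fun z => q z m) z (e s))
    (hwp : ∀ m, ∑ s, p z s * fderiv ℝ (fun z => w z m) z (e s)
        = ∑ s, w z s * fderiv ℝ (fun z => p z m) z (e s))
    (hwq : ∀ m, ∑ s, q z s * fderiv ℝ (fun z => w z m) z (e s)
        = ∑ s, w z s * fderiv ℝ (fun z => q z m) z (e s))
    (hpq : ∀ m, ∑ s, q z s * fderiv ℝ (fun z => p z m) z (e s)
        = ∑ s, p z s * fderiv ℝ (fun z => q z m) z (e s))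
    (a b c : ι) :
    ∑ s, (((u z a * w z s - u z s * w z a) + (p z a * q z s - p z s * q z a)) *
            fderiv ℝ (fun z => (u z b * w z c - u z c * w z b) + (p z b * q z c - p z c * q z b)) z (e s)
        + ((u z b * w z s - u z s * w z b) + (p z b * q z s - p z s * q z b)) *
            fderiv ℝ (fun z => (u z c * w z a - u z a * w z c) + (p z c * q z a - p z a * q z c)) z (e s)
        + ((u z c * w z s - u z s * w z c) + (p z c * q z s - p z s * q z c)) *
            fderiv ℝ (fun z => (u z a * w z b - u z b * w z a) + (p z a * q z b - p z b * q z a)) z (e s)) = 0 := by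
  have hd : ∀ (m n : ι) (v : E),
      fderiv ℝ (fun z => (u z m * w z n - u z n * w z m) + (p z m * q z n - p z n * q z m)) z v
      = (u z m * fderiv ℝ (fun z => w z n) z v + w z n * fderiv ℝ (fun z => u z m) z v
          - (u z n * fderiv ℝ (fun z => w z m) z v + w z m * fderiv ℝ (fun z => u z n) z v))
        + (p z m * fderiv ℝ (fun z => q z n) z v + q z n * fderiv ℝ (fun z => p z m) z v
          - (p z n * fderiv ℝ (fun z => q z m) z v + q z m * fderiv ℝ (fun z => p z n) z v)) := by
    intro m n v
    have H := ((((hu m z).hasFDerivAt.mul (hw n z).hasFDerivAt).sub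
        ((hu n z).hasFDerivAt.mul (hw m z).hasFDerivAt)).add
        (((hp m z).hasFDerivAt.mul (hq n z).hasFDerivAt).sub
        ((hp n z).hasFDerivAt.mul (hq m z).hasFDerivAt)))
    have H' : HasFDerivAt
        (fun z => (u z m * w z n - u z n * w z m) + (p z m * q z n - p z n * q z m)) _ z := H
    rw [H'.fderiv]
    simp [ContinuousLinearMap.add_apply, ContinuousLinearMap.sub_apply,
      ContinuousLinearMap.smul_apply, smul_eq_mul]
  have key : ∀ s : ι,
      (((u z a * w z s - u z s * w z a) + (p z a * q z s - p z s * q z a)) *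
            fderiv ℝ (fun z => (u z b * w z c - u z c * w z b) + (p z b * q z c - p z c * q z b)) z (e s)
        + ((u z b * w z s - u z s * w z b) + (p z b * q z s - p z s * q z b)) *
            fderiv ℝ (fun z => (u z c * w z a - u z a * w z c) + (p z c * q z a - p z a * q z c)) z (e s)
        + ((u z c * w z s - u z s * w z c) + (p z c * q z s - p z s * q z c)) *
            fderiv ℝ (fun z => (u z a * w z b - u z b * w z a) + (p z a * q z b - p z b * q z a)) z (e s))
      = (u z a * w z c) * (w z s * fderiv ℝ (fun z => u z b) z (e s)) +
      (u z a * u z b) * (w z s * fderiv ℝ (fun z => w z c) z (e s)) +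
      (-(u z a * w z b)) * (w z s * fderiv ℝ (fun z => u z c) z (e s)) +
      (-(u z a * u z c)) * (w z s * fderiv ℝ (fun z => w z b) z (e s)) +
      (-(w z a * w z c)) * (u z s * fderiv ℝ (fun z => u z b) z (e s)) +
      (-(w z a * u z b)) * (u z s * fderiv ℝ (fun z => w z c) z (e s)) +
      (w z a * w z b) * (u z s * fderiv ℝ (fun z => u z c) z (e s)) +
      (w z a * u z c) * (u z s * fderiv ℝ (fun z => w z b) z (e s)) +
      (u z a * q z c) * (w z s * fderiv ℝ (fun z => p z b) z (e s)) +
      (u z a * p z b) * (w z s * fderiv ℝ (fun z => q z c) z (e s)) +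
      (-(u z a * q z b)) * (w z s * fderiv ℝ (fun z => p z c) z (e s)) +
      (-(u z a * p z c)) * (w z s * fderiv ℝ (fun z => q z b) z (e s)) +
      (-(w z a * q z c)) * (u z s * fderiv ℝ (fun z => p z b) z (e s)) +
      (-(w z a * p z b)) * (u z s * fderiv ℝ (fun z => q z c) z (e s)) +
      (w z a * q z b) * (u z s * fderiv ℝ (fun z => p z c) z (e s)) +
      (w z a * p z c) * (u z s * fderiv ℝ (fun z => q z b) z (e s)) +
      (p z a * w z c) * (q z s * fderiv ℝ (fun z => u z b) z (e s)) +
      (p z a * u z b) * (q z s * fderiv ℝ (fun z => w z c) z (e s)) +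
      (-(p z a * w z b)) * (q z s * fderiv ℝ (fun z => u z c) z (e s)) +
      (-(p z a * u z c)) * (q z s * fderiv ℝ (fun z => w z b) z (e s)) +
      (-(q z a * w z c)) * (p z s * fderiv ℝ (fun z => u z b) z (e s)) +
      (-(q z a * u z b)) * (p z s * fderiv ℝ (fun z => w z c) z (e s)) +
      (q z a * w z b) * (p z s * fderiv ℝ (fun z => u z c) z (e s)) +
      (q z a * u z c) * (p z s * fderiv ℝ (fun z => w z b) z (e s)) +
      (p z a * q z c) * (q z s * fderiv ℝ (fun z => p z b) z (e s)) +
      (p z a * p z b) * (q z s * fderiv ℝ (fun z => q z c) z (e s)) +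
      (-(p z a * q z b)) * (q z s * fderiv ℝ (fun z => p z c) z (e s)) +
      (-(p z a * p z c)) * (q z s * fderiv ℝ (fun z => q z b) z (e s)) +
      (-(q z a * q z c)) * (p z s * fderiv ℝ (fun z => p z b) z (e s)) +
      (-(q z a * p z b)) * (p z s * fderiv ℝ (fun z => q z c) z (e s)) +
      (q z a * q z b) * (p z s * fderiv ℝ (fun z => p z c) z (e s)) +
      (q z a * p z c) * (p z s * fderiv ℝ (fun z => q z b) z (e s)) +
      (u z b * w z a) * (w z s * fderiv ℝ (fun z => u z c) z (e s)) +
      (u z b * u z c) * (w z s * fderiv ℝ (fun z => w z a) z (e s)) +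
      (-(u z b * w z c)) * (w z s * fderiv ℝ (fun z => u z a) z (e s)) +
      (-(u z b * u z a)) * (w z s * fderiv ℝ (fun z => w z c) z (e s)) +
      (-(w z b * w z a)) * (u z s * fderiv ℝ (fun z => u z c) z (e s)) +
      (-(w z b * u z c)) * (u z s * fderiv ℝ (fun z => w z a) z (e s)) +
      (w z b * w z c) * (u z s * fderiv ℝ (fun z => u z a) z (e s)) +
      (w z b * u z a) * (u z s * fderiv ℝ (fun z => w z c) z (e s)) +
      (u z b * q z a) * (w z s * fderiv ℝ (fun z => p z c) z (e s)) +
      (u z b * p z c) * (w z s * fderiv ℝ (fun z => q z a) z (e s)) +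
      (-(u z b * q z c)) * (w z s * fderiv ℝ (fun z => p z a) z (e s)) +
      (-(u z b * p z a)) * (w z s * fderiv ℝ (fun z => q z c) z (e s)) +
      (-(w z b * q z a)) * (u z s * fderiv ℝ (fun z => p z c) z (e s)) +
      (-(w z b * p z c)) * (u z s * fderiv ℝ (fun z => q z a) z (e s)) +
      (w z b * q z c) * (u z s * fderiv ℝ (fun z => p z a) z (e s)) +
      (w z b * p z a) * (u z s * fderiv ℝ (fun z => q z c) z (e s)) +
      (p z b * w z a) * (q z s * fderiv ℝ (fun z => u z c) z (e s)) +
      (p z b * u z c) * (q z s * fderiv ℝ (fun z => w z a) z (e s)) +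
      (-(p z b * w z c)) * (q z s * fderiv ℝ (fun z => u z a) z (e s)) +
      (-(p z b * u z a)) * (q z s * fderiv ℝ (fun z => w z c) z (e s)) +
      (-(q z b * w z a)) * (p z s * fderiv ℝ (fun z => u z c) z (e s)) +
      (-(q z b * u z c)) * (p z s * fderiv ℝ (fun z => w z a) z (e s)) +
      (q z b * w z c) * (p z s * fderiv ℝ (fun z => u z a) z (e s)) +
      (q z b * u z a) * (p z s * fderiv ℝ (fun z => w z c) z (e s)) +
      (p z b * q z a) * (q z s * fderiv ℝ (fun z => p z c) z (e s)) +
      (p z b * p z c) * (q z s * fderiv ℝ (fun z => q z a) z (e s)) +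
      (-(p z b * q z c)) * (q z s * fderiv ℝ (fun z => p z a) z (e s)) +
      (-(p z b * p z a)) * (q z s * fderiv ℝ (fun z => q z c) z (e s)) +
      (-(q z b * q z a)) * (p z s * fderiv ℝ (fun z => p z c) z (e s)) +
      (-(q z b * p z c)) * (p z s * fderiv ℝ (fun z => q z a) z (e s)) +
      (q z b * q z c) * (p z s * fderiv ℝ (fun z => p z a) z (e s)) +
      (q z b * p z a) * (p z s * fderiv ℝ (fun z => q z c) z (e s)) +
      (u z c * w z b) * (w z s * fderiv ℝ (fun z => u z a) z (e s)) +
      (u z c * u z a) * (w z s * fderiv ℝ (fun z => w z b) z (e s)) +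
      (-(u z c * w z a)) * (w z s * fderiv ℝ (fun z => u z b) z (e s)) +
      (-(u z c * u z b)) * (w z s * fderiv ℝ (fun z => w z a) z (e s)) +
      (-(w z c * w z b)) * (u z s * fderiv ℝ (fun z => u z a) z (e s)) +
      (-(w z c * u z a)) * (u z s * fderiv ℝ (fun z => w z b) z (e s)) +
      (w z c * w z a) * (u z s * fderiv ℝ (fun z => u z b) z (e s)) +
      (w z c * u z b) * (u z s * fderiv ℝ (fun z => w z a) z (e s)) +
      (u z c * q z b) * (w z s * fderiv ℝ (fun z => p z a) z (e s)) +
      (u z c * p z a) * (w z s * fderiv ℝ (fun z => q z b) z (e s)) +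
      (-(u z c * q z a)) * (w z s * fderiv ℝ (fun z => p z b) z (e s)) +
      (-(u z c * p z b)) * (w z s * fderiv ℝ (fun z => q z a) z (e s)) +
      (-(w z c * q z b)) * (u z s * fderiv ℝ (fun z => p z a) z (e s)) +
      (-(w z c * p z a)) * (u z s * fderiv ℝ (fun z => q z b) z (e s)) +
      (w z c * q z a) * (u z s * fderiv ℝ (fun z => p z b) z (e s)) +
      (w z c * p z b) * (u z s * fderiv ℝ (fun z => q z a) z (e s)) +
      (p z c * w z b) * (q z s * fderiv ℝ (fun z => u z a) z (e s)) +
      (p z c * u z a) * (q z s * fderiv ℝ (fun z => w z b) z (e s)) +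
      (-(p z c * w z a)) * (q z s * fderiv ℝ (fun z => u z b) z (e s)) +
      (-(p z c * u z b)) * (q z s * fderiv ℝ (fun z => w z a) z (e s)) +
      (-(q z c * w z b)) * (p z s * fderiv ℝ (fun z => u z a) z (e s)) +
      (-(q z c * u z a)) * (p z s * fderiv ℝ (fun z => w z b) z (e s)) +
      (q z c * w z a) * (p z s * fderiv ℝ (fun z => u z b) z (e s)) +
      (q z c * u z b) * (p z s * fderiv ℝ (fun z => w z a) z (e s)) +
      (p z c * q z b) * (q z s * fderiv ℝ (fun z => p z a) z (e s)) +
      (p z c * p z a) * (q z s * fderiv ℝ (fun z => q z b) z (e s)) +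
      (-(p z c * q z a)) * (q z s * fderiv ℝ (fun z => p z b) z (e s)) +
      (-(p z c * p z b)) * (q z s * fderiv ℝ (fun z => q z a) z (e s)) +
      (-(q z c * q z b)) * (p z s * fderiv ℝ (fun z => p z a) z (e s)) +
      (-(q z c * p z a)) * (p z s * fderiv ℝ (fun z => q z b) z (e s)) +
      (q z c * q z a) * (p z s * fderiv ℝ (fun z => p z b) z (e s)) +
      (q z c * p z b) * (p z s * fderiv ℝ (fun z => q z a) z (e s)) := by
    intro s
    rw [hd b c, hd c a, hd a b]
    ring
  rw [Finset.sum_congr rfl fun s _ => key s]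
  simp only [Finset.sum_add_distrib, ← Finset.mul_sum]
  simp only [huw, hup, huq, hwp, hwq, hpq]
  ring

section LiftLemmas
variable {N : ℕ} {f : (Fin N → ℝ) → ℝ}

lemma pd_contDiff (hf : ContDiff ℝ (⊤ : ℕ∞) f) (s : Fin N) : ContDiff ℝ (⊤ : ℕ∞) (pd f s) :=
  (hf.fderiv_right (by simp)).clm_apply contDiff_const

lemma fq_contDiff (hf : ContDiff ℝ (⊤ : ℕ∞) f) :
    ContDiff ℝ (⊤ : ℕ∞) (fun z : (Fin N → ℝ) × (Fin N → ℝ) => f z.1) :=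
  hf.comp contDiff_fst

lemma ldf_contDiff (hf : ContDiff ℝ (⊤ : ℕ∞) f) :
    ContDiff ℝ (⊤ : ℕ∞) (fun z : (Fin N → ℝ) × (Fin N → ℝ) => ∑ s, pd f s z.1 * z.2 s) := by
  apply ContDiff.sum
  intro s _
  exact ((pd_contDiff hf s).comp contDiff_fst).mul
    (((ContinuousLinearMap.proj (R := ℝ) (φ := fun _ : Fin N => ℝ) s).comp
      (ContinuousLinearMap.snd ℝ (Fin N → ℝ) (Fin N → ℝ))).contDiff)

lemma hasFDerivAt_fq (hf : ContDiff ℝ (⊤ : ℕ∞) f) (z : (Fin N → ℝ) × (Fin N → ℝ)) :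
    HasFDerivAt (fun z : (Fin N → ℝ) × (Fin N → ℝ) => f z.1)
      ((fderiv ℝ f z.1).comp (ContinuousLinearMap.fst ℝ _ _)) z :=
  ((hf.differentiable (by simp)).differentiableAt.hasFDerivAt).comp z (hasFDerivAt_fst)

lemma fderiv_fq_inl (hf : ContDiff ℝ (⊤ : ℕ∞) f) (z : (Fin N → ℝ) × (Fin N → ℝ)) (t : Fin N) :
    fderiv ℝ (fun z : (Fin N → ℝ) × (Fin N → ℝ) => f z.1) z (dir N (Sum.inl t))
      = pd f t z.1 := by
  rw [(hasFDerivAt_fq hf z).fderiv]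
  simp [dir, pd]

lemma fderiv_fq_inr (hf : ContDiff ℝ (⊤ : ℕ∞) f) (z : (Fin N → ℝ) × (Fin N → ℝ)) (t : Fin N) :
    fderiv ℝ (fun z : (Fin N → ℝ) × (Fin N → ℝ) => f z.1) z (dir N (Sum.inr t)) = 0 := by
  rw [(hasFDerivAt_fq hf z).fderiv]
  simp [dir]

lemma fderiv_ldf_inr (hf : ContDiff ℝ (⊤ : ℕ∞) f) (z : (Fin N → ℝ) × (Fin N → ℝ)) (t : Fin N) :
    fderiv ℝ (fun z : (Fin N → ℝ) × (Fin N → ℝ) => ∑ s, pd f s z.1 * z.2 s) z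
      (dir N (Sum.inr t)) = pd f t z.1 := by
  have H : HasFDerivAt (fun z : (Fin N → ℝ) × (Fin N → ℝ) => ∑ s, pd f s z.1 * z.2 s)
      (∑ s, (pd f s z.1 • ((ContinuousLinearMap.proj (R := ℝ) (φ := fun _ : Fin N => ℝ) s).comp (ContinuousLinearMap.snd ℝ _ _))
        + z.2 s • ((fderiv ℝ (pd f s) z.1).comp (ContinuousLinearMap.fst ℝ _ _)))) z := by
    apply HasFDerivAt.fun_sum
    intro s _
    have hs := ((ContinuousLinearMap.proj (R := ℝ) (φ := fun _ : Fin N => ℝ) s).comp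
      (ContinuousLinearMap.snd ℝ (Fin N → ℝ) (Fin N → ℝ))).hasFDerivAt (x := z)
    exact (hasFDerivAt_fq (pd_contDiff hf s) z).mul hs
  rw [H.fderiv]
  simp [dir, Pi.single_apply, mul_ite]


lemma comm_VV (v w : (Fin N → ℝ) → Fin N → ℝ)
    (hv : ∀ i, ContDiff ℝ (⊤ : ℕ∞) fun x => v x i) (hw : ∀ i, ContDiff ℝ (⊤ : ℕ∞) fun x => w x i)
    (z : (Fin N → ℝ) × (Fin N → ℝ)) (m : Fin N ⊕ Fin N) :
    ∑ s, liftV w z s * fderiv ℝ (fun z => liftV v z m) z (dir N s)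
      = ∑ s, liftV v z s * fderiv ℝ (fun z => liftV w z m) z (dir N s) := by
  cases m with
  | inl i => simp [liftV]
  | inr i =>
    rw [Fintype.sum_sum_type, Fintype.sum_sum_type]
    simp [liftV, fderiv_fq_inr (hv i), fderiv_fq_inr (hw i)]

lemma comm_CV (v w : (Fin N → ℝ) → Fin N → ℝ)
    (hv : ∀ i, ContDiff ℝ (⊤ : ℕ∞) fun x => v x i) (hw : ∀ i, ContDiff ℝ (⊤ : ℕ∞) fun x => w x i)
    (hvw : ∀ x i, vbr v w x i = 0)
    (z : (Fin N → ℝ) × (Fin N → ℝ)) (m : Fin N ⊕ Fin N) :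
    ∑ s, liftV w z s * fderiv ℝ (fun z => liftC v z m) z (dir N s)
      = ∑ s, liftC v z s * fderiv ℝ (fun z => liftV w z m) z (dir N s) := by
  cases m with
  | inl i =>
    rw [Fintype.sum_sum_type, Fintype.sum_sum_type]
    simp [liftV, liftC, fderiv_fq_inr (hv i)]
  | inr i =>
    rw [Fintype.sum_sum_type, Fintype.sum_sum_type]
    simp only [liftV, liftC, Sum.elim_inl, Sum.elim_inr, zero_mul, mul_zero,
      fderiv_ldf_inr (hv i), fderiv_fq_inl (hw i), fderiv_fq_inr (hw i),
      Finset.sum_const_zero, add_zero, zero_add]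
    have h := hvw z.1 i
    unfold vbr at h
    rw [Finset.sum_sub_distrib] at h
    linarith

end LiftLemmas

end Aux

/-- `v₁_C ∧ v₂_V + v₃_V ∧ v₄_V` is a Poisson tensor under the
stated commutation assumptions. -/
theorem sum_wedge_CV_VV_is_poisson {N : ℕ}
    (v₁ v₂ v₃ v₄ : (Fin N → ℝ) → Fin N → ℝ)
    (h₁ : ∀ i, ContDiff ℝ (⊤ : ℕ∞) fun x => v₁ x i) (h₂ : ∀ i, ContDiff ℝ (⊤ : ℕ∞) fun x => v₂ x i)
    (h₃ : ∀ i, ContDiff ℝ (⊤ : ℕ∞) fun x => v₃ x i) (h₄ : ∀ i, ContDiff ℝ (⊤ : ℕ∞) fun x => v₄ x i)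
    (h₁₂ : ∀ x i, vbr v₁ v₂ x i = 0) (h₁₃ : ∀ x i, vbr v₁ v₃ x i = 0)
    (h₁₄ : ∀ x i, vbr v₁ v₄ x i = 0) :
    IsPoissonT (fun z => wedge (liftC v₁) (liftV v₂) z + wedge (liftV v₃) (liftV v₄) z) := by
  classical
  have Hu : ∀ m, ContDiff ℝ (⊤ : ℕ∞) (fun z => liftC v₁ z m) := by
    intro m
    cases m with
    | inl i => exact fq_contDiff (h₁ i)
    | inr i => exact ldf_contDiff (h₁ i)
  have Hw : ∀ m, ContDiff ℝ (⊤ : ℕ∞) (fun z => liftV v₂ z m) := by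
    intro m
    cases m with
    | inl i => exact contDiff_const
    | inr i => exact fq_contDiff (h₂ i)
  have Hp : ∀ m, ContDiff ℝ (⊤ : ℕ∞) (fun z => liftV v₃ z m) := by
    intro m
    cases m with
    | inl i => exact contDiff_const
    | inr i => exact fq_contDiff (h₃ i)
  have Hq : ∀ m, ContDiff ℝ (⊤ : ℕ∞) (fun z => liftV v₄ z m) := by
    intro m
    cases m with
    | inl i => exact contDiff_const
    | inr i => exact fq_contDiff (h₄ i)
  refine ⟨?_, ?_, ?_⟩
  · intro a b
    simp only [Matrix.add_apply, wedge, Matrix.of_apply]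
    exact ((((Hu a).mul (Hw b)).sub ((Hu b).mul (Hw a)))).add
      ((((Hp a).mul (Hq b))).sub (((Hp b).mul (Hq a))))
  · intro z a b
    simp only [Matrix.add_apply, wedge, Matrix.of_apply]
    ring
  · intro z a b c
    simp only [Matrix.add_apply, wedge, Matrix.of_apply, pdT]
    exact jacobi_wedge_sum (dir N) (liftC v₁) (liftV v₂) (liftV v₃) (liftV v₄)
      (fun m => (Hu m).differentiable (by simp)) (fun m => (Hw m).differentiable (by simp))
      (fun m => (Hp m).differentiable (by simp)) (fun m => (Hq m).differentiable (by simp)) z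
      (comm_CV v₁ v₂ h₁ h₂ h₁₂ z) (comm_CV v₁ v₃ h₁ h₃ h₁₃ z) (comm_CV v₁ v₄ h₁ h₄ h₁₄ z)
      (comm_VV v₂ v₃ h₂ h₃ z) (comm_VV v₂ v₄ h₂ h₄ z) (comm_VV v₃ v₄ h₃ h₄ z) a b c
end
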